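/- Let H₁, H₂ be separable Hilbert spaces, A = A* ≥ 0 a self-adjoint (possibly unbounded) operator on H₁ with spectral measure E, and S a nonnegative self-adjoint trace-class operator on H₁ with eigenbasis (e_j), eigenvalues (σ_j), satisfying Σ_j σ_j ∫₀^∞ λ ⟨e_j, E(dλ) e_j⟩ < ∞. If T is a nonnegative trace-class operator on H₁ ⊗ H₂ with partial trace over H₂ equal to S, then T^{1/2}(A ⊗ I)T^{1/2} is trace-class and trace(T^{1/2}(A ⊗ I)T^{1/2}) = trace(S^{1/2} A S^{1/2}). -/

import Mathlib

/-!
For every Borel set `ω` the partial trace condition gives `tr (T (E ω ⊗ 1)) = tr (S E ω)`: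
both sides are sums of nonnegative terms, so they can be computed in `ℝ≥0∞` and rearranged
freely, passing through the product basis `e j ⊗ g i` of `H₁ ⊗ H₂`. Hence the measures
`∑ τ_k ν_{f_k}` and `∑ σ_j μ_{e_j}` coincide, and integrating `λ ↦ λ` against them yields
the two energies.
-/

open MeasureTheory
open scoped ComplexInnerProductSpace InnerProductSpace InnerProduct

section Parseval

variable {𝕜 E ι : Type*} [RCLike 𝕜] [NormedAddCommGroup E] [InnerProductSpace 𝕜 E]

theorem Orthonormal.norm_sub_sum_inner_smul_sq {v : ι → E} (hv : Orthonormal 𝕜 v) (x : E)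
    (s : Finset ι) :
    ‖x - ∑ i ∈ s, ⟪v i, x⟫_𝕜 • v i‖ ^ 2 = ‖x‖ ^ 2 - ∑ i ∈ s, ‖⟪v i, x⟫_𝕜‖ ^ 2 := by
  have hinner : ⟪x, ∑ i ∈ s, ⟪v i, x⟫_𝕜 • v i⟫_𝕜 = ((∑ i ∈ s, ‖⟪v i, x⟫_𝕜‖ ^ 2 : ℝ) : 𝕜) := by
    rw [inner_sum, RCLike.ofReal_sum]
    refine Finset.sum_congr rfl fun i _ => ?_
    rw [inner_smul_right, ← inner_conj_symm x (v i), RCLike.mul_conj, RCLike.ofReal_pow]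
  have hnorm : ‖∑ i ∈ s, ⟪v i, x⟫_𝕜 • v i‖ ^ 2 = ∑ i ∈ s, ‖⟪v i, x⟫_𝕜‖ ^ 2 := by
    rw [← RCLike.ofReal_inj (K := 𝕜), RCLike.ofReal_pow, ← inner_self_eq_norm_sq_to_K,
      hv.inner_sum]
    simp only [RCLike.conj_mul, RCLike.ofReal_sum, RCLike.ofReal_pow]
  rw [norm_sub_sq (𝕜 := 𝕜), hinner, hnorm, RCLike.ofReal_re]
  ring

theorem Orthonormal.hasSum_inner_smul_of_hasSum_norm_sq {v : ι → E} (hv : Orthonormal 𝕜 v)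
    {x : E} (hx : HasSum (fun i => ‖⟪v i, x⟫_𝕜‖ ^ 2) (‖x‖ ^ 2)) :
    HasSum (fun i => ⟪v i, x⟫_𝕜 • v i) x := by
  have hsq : Filter.Tendsto (fun s : Finset ι => ‖x - ∑ i ∈ s, ⟪v i, x⟫_𝕜 • v i‖ ^ 2)
      Filter.atTop (nhds 0) := by
    rw [HasSum, SummationFilter.unconditional_filter] at hx
    have h := (tendsto_const_nhds (x := ‖x‖ ^ 2)).sub hx
    rw [sub_self] at h
    simpa only [hv.norm_sub_sum_inner_smul_sq] using h
  rw [HasSum, SummationFilter.unconditional_filter, tendsto_iff_norm_sub_tendsto_zero]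
  simpa only [norm_sub_rev, Real.sqrt_sq (norm_nonneg _), Real.sqrt_zero] using
    hsq.sqrt

theorem HilbertBasis.hasSum_norm_inner_sq (b : HilbertBasis ι 𝕜 E) (x : E) :
    HasSum (fun i => ‖⟪b i, x⟫_𝕜‖ ^ 2) (‖x‖ ^ 2) := by
  have h := (b.hasSum_inner_mul_inner x x).mapL (RCLike.reCLM (K := 𝕜))
  simpa only [RCLike.reCLM_apply, ← inner_conj_symm x (b _), RCLike.conj_mul,
    ← RCLike.ofReal_pow, RCLike.ofReal_re, inner_self_eq_norm_sq] using h

theorem HilbertBasis.tsum_enorm_inner_sq (b : HilbertBasis ι 𝕜 E) (x : E) :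
    ∑' i, ‖⟪b i, x⟫_𝕜‖ₑ ^ 2 = ‖x‖ₑ ^ 2 := by
  simp only [← ofReal_norm, ← ENNReal.ofReal_pow (norm_nonneg _)]
  rw [← ENNReal.ofReal_tsum_of_nonneg (fun _ => sq_nonneg _) (b.hasSum_norm_inner_sq x).summable,
    (b.hasSum_norm_inner_sq x).tsum_eq]

end Parseval

section DiagonalTrace

variable {𝕜 E F ι κ : Type*} [RCLike 𝕜] [NormedAddCommGroup E] [InnerProductSpace 𝕜 E]
  [NormedAddCommGroup F] [InnerProductSpace 𝕜 F]

theorem HilbertBasis.hasSum_mul_norm_inner_sq (b : HilbertBasis ι 𝕜 E) {T : E →L[𝕜] E}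
    {τ : ι → ℝ} (hT : ∀ i, T (b i) = (τ i : 𝕜) • b i) (x : E) :
    HasSum (fun i => τ i * ‖⟪b i, x⟫_𝕜‖ ^ 2) (RCLike.re ⟪x, T x⟫_𝕜) := by
  have h := (((b.hasSum_repr x).mapL T).mapL (innerSL 𝕜 x)).mapL (RCLike.reCLM (K := 𝕜))
  have hterm : ∀ i, RCLike.re ⟪x, T (b.repr x i • b i)⟫_𝕜 = τ i * ‖⟪b i, x⟫_𝕜‖ ^ 2 := by
    intro i
    rw [map_smul, hT, b.repr_apply_apply, inner_smul_right, inner_smul_right,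
      ← inner_conj_symm x (b i), mul_left_comm, RCLike.mul_conj, ← RCLike.ofReal_pow,
      ← RCLike.ofReal_mul, RCLike.ofReal_re]
  simpa only [RCLike.reCLM_apply, innerSL_apply_apply, hterm] using h

theorem HilbertBasis.tsum_ofReal_mul_enorm_inner_sq (b : HilbertBasis ι 𝕜 E) {T : E →L[𝕜] E}
    {τ : ι → ℝ} (hτ : ∀ i, 0 ≤ τ i) (hT : ∀ i, T (b i) = (τ i : 𝕜) • b i) (x : E) :
    ∑' i, ENNReal.ofReal (τ i) * ‖⟪b i, x⟫_𝕜‖ₑ ^ 2 = ENNReal.ofReal (RCLike.re ⟪x, T x⟫_𝕜) := by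
  have h := b.hasSum_mul_norm_inner_sq hT x
  simp only [← ofReal_norm, ← ENNReal.ofReal_pow (norm_nonneg _),
    ← ENNReal.ofReal_mul (hτ _)]
  rw [← ENNReal.ofReal_tsum_of_nonneg (fun i => mul_nonneg (hτ i) (sq_nonneg _)) h.summable,
    h.tsum_eq]

/-- Both sides compute the trace of `R T R†`, in the eigenbasis of `T` and in the basis `u`. -/
theorem HilbertBasis.tsum_ofReal_mul_enorm_apply_sq [CompleteSpace E] [CompleteSpace F]
    (b : HilbertBasis ι 𝕜 E) (u : HilbertBasis κ 𝕜 F) {T : E →L[𝕜] E} {τ : ι → ℝ}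
    (hτ : ∀ i, 0 ≤ τ i) (hT : ∀ i, T (b i) = (τ i : 𝕜) • b i) (R : E →L[𝕜] F) :
    ∑' i, ENNReal.ofReal (τ i) * ‖R (b i)‖ₑ ^ 2 =
      ∑' k, ENNReal.ofReal (RCLike.re ⟪(R†) (u k), T ((R†) (u k))⟫_𝕜) := by
  calc ∑' i, ENNReal.ofReal (τ i) * ‖R (b i)‖ₑ ^ 2
      = ∑' i, ∑' k, ENNReal.ofReal (τ i) * ‖⟪b i, (R†) (u k)⟫_𝕜‖ₑ ^ 2 := by
        refine tsum_congr fun i => ?_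
        rw [← u.tsum_enorm_inner_sq, ← ENNReal.tsum_mul_left]
        refine tsum_congr fun k => ?_
        rw [ContinuousLinearMap.adjoint_inner_right, ← inner_conj_symm, RCLike.enorm_conj]
    _ = ∑' k, ENNReal.ofReal (RCLike.re ⟪(R†) (u k), T ((R†) (u k))⟫_𝕜) := by
        rw [ENNReal.tsum_comm]
        exact tsum_congr fun k => b.tsum_ofReal_mul_enorm_inner_sq hτ hT _

end DiagonalTrace

section TensorProduct

variable {𝕜 H₁ H₂ K ι₁ ι₂ : Type*} [RCLike 𝕜]
  [NormedAddCommGroup H₁] [InnerProductSpace 𝕜 H₁]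
  [NormedAddCommGroup H₂] [InnerProductSpace 𝕜 H₂]
  [NormedAddCommGroup K] [InnerProductSpace 𝕜 K] {tmul : H₁ → H₂ → K}

theorem orthonormal_of_inner_tmul
    (htinner : ∀ (a c : H₁) (b d : H₂), ⟪tmul a b, tmul c d⟫_𝕜 = ⟪a, c⟫_𝕜 * ⟪b, d⟫_𝕜)
    {v : ι₁ → H₁} {w : ι₂ → H₂} (hv : Orthonormal 𝕜 v) (hw : Orthonormal 𝕜 w) :
    Orthonormal 𝕜 (fun p : ι₁ × ι₂ => tmul (v p.1) (w p.2)) := by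
  classical
  rw [orthonormal_iff_ite] at hv hw ⊢
  rintro ⟨i, j⟩ ⟨i', j'⟩
  rw [htinner, hv, hw]
  by_cases hi : i = i' <;> by_cases hj : j = j' <;> simp [hi, hj]

theorem HilbertBasis.hasSum_norm_inner_tmul_sq
    (htinner : ∀ (a c : H₁) (b d : H₂), ⟪tmul a b, tmul c d⟫_𝕜 = ⟪a, c⟫_𝕜 * ⟪b, d⟫_𝕜)
    (e : HilbertBasis ι₁ 𝕜 H₁) (g : HilbertBasis ι₂ 𝕜 H₂) (a : H₁) (b : H₂) :
    HasSum (fun p : ι₁ × ι₂ => ‖⟪tmul (e p.1) (g p.2), tmul a b⟫_𝕜‖ ^ 2) (‖tmul a b‖ ^ 2) := by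
  have he := e.hasSum_norm_inner_sq a
  have hg := g.hasSum_norm_inner_sq b
  have hprod := he.mul hg (he.summable.mul_of_nonneg hg.summable
    (fun _ => sq_nonneg _) (fun _ => sq_nonneg _))
  have hnorm : ‖tmul a b‖ ^ 2 = ‖a‖ ^ 2 * ‖b‖ ^ 2 := by
    rw [← RCLike.ofReal_inj (K := 𝕜)]
    push_cast
    rw [← inner_self_eq_norm_sq_to_K, htinner, inner_self_eq_norm_sq_to_K,
      inner_self_eq_norm_sq_to_K]
  simpa only [htinner, norm_mul, mul_pow, hnorm] using hprod

theorem HilbertBasis.exists_coe_eq_tmul [CompleteSpace K]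
    (htinner : ∀ (a c : H₁) (b d : H₂), ⟪tmul a b, tmul c d⟫_𝕜 = ⟪a, c⟫_𝕜 * ⟪b, d⟫_𝕜)
    (hdense : Dense ((Submodule.span 𝕜 {v : K | ∃ a b, v = tmul a b} : Submodule 𝕜 K) : Set K))
    (e : HilbertBasis ι₁ 𝕜 H₁) (g : HilbertBasis ι₂ 𝕜 H₂) :
    ∃ u : HilbertBasis (ι₁ × ι₂) 𝕜 K, ⇑u = fun p => tmul (e p.1) (g p.2) := by
  have horth := orthonormal_of_inner_tmul htinner e.orthonormal g.orthonormal
  have hle : Submodule.span 𝕜 {v : K | ∃ a b, v = tmul a b} ≤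
      (Submodule.span 𝕜
        (Set.range fun p : ι₁ × ι₂ => tmul (e p.1) (g p.2))).topologicalClosure := by
    rw [Submodule.span_le]
    rintro _ ⟨a, b, rfl⟩
    refine mem_closure_of_tendsto (horth.hasSum_inner_smul_of_hasSum_norm_sq
      (e.hasSum_norm_inner_tmul_sq htinner g a b)) (Filter.Eventually.of_forall fun s => ?_)
    exact Submodule.sum_mem _ fun p _ => Submodule.smul_mem _ _ (Submodule.subset_span ⟨p, rfl⟩)
  have hspan : ⊤ ≤ (Submodule.span 𝕜
      (Set.range fun p : ι₁ × ι₂ => tmul (e p.1) (g p.2))).topologicalClosure := fun x _ =>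
    Submodule.topologicalClosure_minimal _ hle (Submodule.isClosed_topologicalClosure _) (hdense x)
  exact ⟨HilbertBasis.mk horth hspan, HilbertBasis.coe_mk horth hspan⟩

end TensorProduct

theorem IsStarProjection.ofReal_re_inner_apply_self {𝕜 E : Type*} [RCLike 𝕜]
    [NormedAddCommGroup E] [InnerProductSpace 𝕜 E] [CompleteSpace E] {P : E →L[𝕜] E}
    (hP : IsStarProjection P) (x : E) :
    ENNReal.ofReal (RCLike.re ⟪x, P x⟫_𝕜) = ‖P x‖ₑ ^ 2 := by
  have hPP : P (P x) = P x := congr($(hP.isIdempotentElem.eq) x)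
  rw [← hPP, ← ContinuousLinearMap.adjoint_inner_left, hP.isSelfAdjoint.adjoint_eq, hPP,
    inner_self_eq_norm_sq, ENNReal.ofReal_pow (norm_nonneg _), ofReal_norm]

section TensorOperators

variable {𝕜 H₁ H₂ K : Type*} [RCLike 𝕜]
  [NormedAddCommGroup H₁] [InnerProductSpace 𝕜 H₁]
  [NormedAddCommGroup H₂] [InnerProductSpace 𝕜 H₂]
  [NormedAddCommGroup K] [InnerProductSpace 𝕜 K]
  {tmul : H₁ → H₂ → K} {op : (H₁ →L[𝕜] H₁) → (H₂ →L[𝕜] H₂) → (K →L[𝕜] K)}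

theorem op_comp_op_of_dense
    (hdense : Dense ((Submodule.span 𝕜 {v : K | ∃ a b, v = tmul a b} : Submodule 𝕜 K) : Set K))
    (hop : ∀ A B x y, op A B (tmul x y) = tmul (A x) (B y)) (A A' : H₁ →L[𝕜] H₁)
    (B B' : H₂ →L[𝕜] H₂) : op A B ∘L op A' B' = op (A ∘L A') (B ∘L B') := by
  refine ContinuousLinearMap.ext_on hdense ?_
  rintro _ ⟨a, b, rfl⟩
  simp only [ContinuousLinearMap.comp_apply, hop]

variable [CompleteSpace H₁] [CompleteSpace H₂] [CompleteSpace K]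

theorem adjoint_op_of_dense
    (htinner : ∀ (a c : H₁) (b d : H₂), ⟪tmul a b, tmul c d⟫_𝕜 = ⟪a, c⟫_𝕜 * ⟪b, d⟫_𝕜)
    (hdense : Dense ((Submodule.span 𝕜 {v : K | ∃ a b, v = tmul a b} : Submodule 𝕜 K) : Set K))
    (hop : ∀ A B x y, op A B (tmul x y) = tmul (A x) (B y)) (A : H₁ →L[𝕜] H₁)
    (B : H₂ →L[𝕜] H₂) : (op A B)† = op (A†) (B†) := by
  refine ContinuousLinearMap.ext_on hdense ?_
  rintro _ ⟨a, b, rfl⟩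
  refine ext_inner_right 𝕜 fun w => ?_
  have h : innerSL 𝕜 (tmul a b) ∘L op A B = innerSL 𝕜 (tmul ((A†) a) ((B†) b)) := by
    refine ContinuousLinearMap.ext_on hdense ?_
    rintro _ ⟨c, d, rfl⟩
    simp only [ContinuousLinearMap.comp_apply, innerSL_apply_apply, hop, htinner,
      ContinuousLinearMap.adjoint_inner_left]
  rw [ContinuousLinearMap.adjoint_inner_left, hop]
  exact congr($h w)

theorem IsStarProjection.op_of_dense
    (htinner : ∀ (a c : H₁) (b d : H₂), ⟪tmul a b, tmul c d⟫_𝕜 = ⟪a, c⟫_𝕜 * ⟪b, d⟫_𝕜)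
    (hdense : Dense ((Submodule.span 𝕜 {v : K | ∃ a b, v = tmul a b} : Submodule 𝕜 K) : Set K))
    (hop : ∀ A B x y, op A B (tmul x y) = tmul (A x) (B y)) {A : H₁ →L[𝕜] H₁}
    {B : H₂ →L[𝕜] H₂} (hA : IsStarProjection A) (hB : IsStarProjection B) :
    IsStarProjection (op A B) where
  isIdempotentElem := by
    rw [IsIdempotentElem, ContinuousLinearMap.mul_def, op_comp_op_of_dense hdense hop,
      ← ContinuousLinearMap.mul_def, ← ContinuousLinearMap.mul_def, hA.isIdempotentElem.eq,
      hB.isIdempotentElem.eq]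
  isSelfAdjoint := by
    rw [IsSelfAdjoint, ContinuousLinearMap.star_eq_adjoint, adjoint_op_of_dense htinner hdense hop,
      ← ContinuousLinearMap.star_eq_adjoint, ← ContinuousLinearMap.star_eq_adjoint,
      hA.isSelfAdjoint.star_eq, hB.isSelfAdjoint.star_eq]

/-- The partial trace condition `tr₂ T = S` gives `tr (T (P†P ⊗ 1)) = tr (S P†P)`. -/
theorem tsum_ofReal_mul_enorm_op_one_sq {ι₁ ι₂ κ : Type*}
    (htinner : ∀ (a c : H₁) (b d : H₂), ⟪tmul a b, tmul c d⟫_𝕜 = ⟪a, c⟫_𝕜 * ⟪b, d⟫_𝕜)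
    (hdense : Dense ((Submodule.span 𝕜 {v : K | ∃ a b, v = tmul a b} : Submodule 𝕜 K) : Set K))
    (hop : ∀ A B x y, op A B (tmul x y) = tmul (A x) (B y))
    (e : HilbertBasis ι₁ 𝕜 H₁) (g : HilbertBasis ι₂ 𝕜 H₂) (f : HilbertBasis κ 𝕜 K)
    {S : H₁ →L[𝕜] H₁} {σ : ι₁ → ℝ} (hσ : ∀ j, 0 ≤ σ j) (hSe : ∀ j, S (e j) = (σ j : 𝕜) • e j)
    {T : K →L[𝕜] K} (hT : T.IsPositive) {τ : κ → ℝ} (hτ : ∀ k, 0 ≤ τ k)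
    (hTf : ∀ k, T (f k) = (τ k : 𝕜) • f k)
    (hpt : ∀ x y : H₁, HasSum (fun i => ⟪tmul x (g i), T (tmul y (g i))⟫_𝕜) ⟪x, S y⟫_𝕜)
    (P : H₁ →L[𝕜] H₁) :
    ∑' k, ENNReal.ofReal (τ k) * ‖op P 1 (f k)‖ₑ ^ 2 =
      ∑' j, ENNReal.ofReal (σ j) * ‖P (e j)‖ₑ ^ 2 := by
  obtain ⟨u, hu⟩ := e.exists_coe_eq_tmul htinner hdense g
  have hpt_re : ∀ x, ∑' i, ENNReal.ofReal (RCLike.re ⟪tmul x (g i), T (tmul x (g i))⟫_𝕜) =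
      ENNReal.ofReal (RCLike.re ⟪x, S x⟫_𝕜) := by
    intro x
    have h := (hpt x x).mapL (RCLike.reCLM (K := 𝕜))
    simp only [RCLike.reCLM_apply] at h
    rw [← ENNReal.ofReal_tsum_of_nonneg (fun i => hT.re_inner_nonneg_right _) h.summable,
      h.tsum_eq]
  calc ∑' k, ENNReal.ofReal (τ k) * ‖op P 1 (f k)‖ₑ ^ 2
      = ∑' p, ENNReal.ofReal (RCLike.re ⟪((op P 1)†) (u p), T (((op P 1)†) (u p))⟫_𝕜) :=
        f.tsum_ofReal_mul_enorm_apply_sq u hτ hTf _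
    _ = ∑' j, ∑' i, ENNReal.ofReal
          (RCLike.re ⟪tmul ((P†) (e j)) (g i), T (tmul ((P†) (e j)) (g i))⟫_𝕜) := by
        rw [← ENNReal.tsum_prod, adjoint_op_of_dense htinner hdense hop, hu]
        simp only [hop, ContinuousLinearMap.adjoint_one, one_apply_eq_self]
    _ = ∑' j, ENNReal.ofReal (RCLike.re ⟪(P†) (e j), S ((P†) (e j))⟫_𝕜) :=
        tsum_congr fun j => hpt_re _
    _ = ∑' j, ENNReal.ofReal (σ j) * ‖P (e j)‖ₑ ^ 2 :=
        (e.tsum_ofReal_mul_enorm_apply_sq e hσ hSe P).symm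

end TensorOperators

theorem stmt14_general {H₁ H₂ K ι₁ ι₂ κ : Type*}
    [NormedAddCommGroup H₁] [InnerProductSpace ℂ H₁] [CompleteSpace H₁]
    [NormedAddCommGroup H₂] [InnerProductSpace ℂ H₂] [CompleteSpace H₂]
    [NormedAddCommGroup K] [InnerProductSpace ℂ K] [CompleteSpace K]
    (e : HilbertBasis ι₁ ℂ H₁) (g : HilbertBasis ι₂ ℂ H₂) (f : HilbertBasis κ ℂ K)
    (tmul : H₁ → H₂ → K)
    (htinner : ∀ (a c : H₁) (b d : H₂), ⟪tmul a b, tmul c d⟫ = ⟪a, c⟫ * ⟪b, d⟫)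
    (hdense : Dense ((Submodule.span ℂ {v : K | ∃ a b, v = tmul a b} : Submodule ℂ K) : Set K))
    (op : (H₁ →L[ℂ] H₁) → (H₂ →L[ℂ] H₂) → (K →L[ℂ] K))
    (hop : ∀ (A : H₁ →L[ℂ] H₁) (B : H₂ →L[ℂ] H₂) (x : H₁) (y : H₂),
      op A B (tmul x y) = tmul (A x) (B y))
    -- the spectral measure `E` of `A`, supported on `[0, ∞)`
    (E : Set ℝ → (H₁ →L[ℂ] H₁))
    (hproj : ∀ ω, MeasurableSet ω → IsSelfAdjoint (E ω) ∧ (E ω) ∘L (E ω) = E ω)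
    (μ : H₁ → Measure ℝ)
    (hμ : ∀ (x : H₁) (ω : Set ℝ), MeasurableSet ω →
      μ x ω = ENNReal.ofReal ((⟪x, E ω x⟫).re))
    (ν : K → Measure ℝ)
    (hν : ∀ (v : K) (ω : Set ℝ), MeasurableSet ω →
      ν v ω = ENNReal.ofReal ((⟪v, op (E ω) 1 v⟫).re))
    -- `S`: nonnegative trace-class operator on `H₁`, eigenbasis `e`, eigenvalues `σ`
    (S : H₁ →L[ℂ] H₁)
    (σ : ι₁ → ℝ) (hσ : ∀ j, 0 ≤ σ j) (hSe : ∀ j, S (e j) = (σ j : ℂ) • e j)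
    -- finite energy
    (henergy : (∑' j, ENNReal.ofReal (σ j) * ∫⁻ l, ENNReal.ofReal l ∂(μ (e j))) < ⊤)
    -- `T`: nonnegative trace-class operator on `K`, eigenbasis `f`, eigenvalues `τ`
    (T : K →L[ℂ] K) (hT : T.IsPositive)
    (τ : κ → ℝ) (hτ : ∀ k, 0 ≤ τ k) (hTf : ∀ k, T (f k) = (τ k : ℂ) • f k)
    -- partial trace of `T` over `H₂` equals `S`
    (hpt : ∀ x y : H₁,
      HasSum (fun i => ⟪tmul x (g i), T (tmul y (g i))⟫) ⟪x, S y⟫) :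
    (∑' k, ENNReal.ofReal (τ k) * ∫⁻ l, ENNReal.ofReal l ∂(ν (f k))) < ⊤ ∧
      (∑' k, ENNReal.ofReal (τ k) * ∫⁻ l, ENNReal.ofReal l ∂(ν (f k))) =
        ∑' j, ENNReal.ofReal (σ j) * ∫⁻ l, ENNReal.ofReal l ∂(μ (e j)) := by
  have hmeasure : (Measure.sum fun k => ENNReal.ofReal (τ k) • ν (f k)) =
      Measure.sum fun j => ENNReal.ofReal (σ j) • μ (e j) := by
    ext ω hω
    have hE : IsStarProjection (E ω) := ⟨(hproj ω hω).2, (hproj ω hω).1⟩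
    have hEop := hE.op_of_dense htinner hdense hop (IsStarProjection.one _)
    simp only [Measure.sum_apply _ hω, Measure.smul_apply, smul_eq_mul, hν _ ω hω, hμ _ ω hω,
      RCLike.re_to_complex.symm, hEop.ofReal_re_inner_apply_self, hE.ofReal_re_inner_apply_self]
    exact tsum_ofReal_mul_enorm_op_one_sq htinner hdense hop e g f hσ hSe hT hτ hTf hpt (E ω)
  have htrace : ∑' k, ENNReal.ofReal (τ k) * ∫⁻ l, ENNReal.ofReal l ∂(ν (f k)) =
      ∑' j, ENNReal.ofReal (σ j) * ∫⁻ l, ENNReal.ofReal l ∂(μ (e j)) := by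
    simp only [← smul_eq_mul, ← lintegral_smul_measure, ← lintegral_sum_measure, hmeasure]
  exact ⟨htrace ▸ henergy, htrace⟩

/-- Energy and partial trace: if `A = A* ≥ 0` is self-adjoint on `H₁` with spectral
measure `E`, `S ≥ 0` is trace class on `H₁` with eigenbasis `(e_j)`, eigenvalues `(σ_j)`,
satisfying the finite-energy condition `Σ_j σ_j ∫ λ ⟨e_j, E(dλ) e_j⟩ < ∞`, and `T ≥ 0` is
trace class on `H₁ ⊗ H₂` with partial trace over `H₂` equal to `S`, then
`T^{1/2}(A ⊗ I)T^{1/2}` is trace class with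
`trace(T^{1/2}(A ⊗ I)T^{1/2}) = trace(S^{1/2} A S^{1/2})`.

Encodings: the tensor product `H₁ ⊗ H₂` is a Hilbert space `K` with structure map `tmul`
and operator map `op` (`op A B = A ⊗ B`); the unbounded operator `A` is encoded by its
projection-valued measure `E`, whose scalar spectral measures are `μ x = ⟨x, E(·) x⟩` on
`H₁` and `ν v = ⟨v, (E(·) ⊗ I) v⟩` on `K`; the traces of `S^{1/2} A S^{1/2}` and
`T^{1/2}(A ⊗ I)T^{1/2}` are the spectral integrals `Σ_j σ_j ∫ λ dμ_{e_j}` and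
`Σ_k τ_k ∫ λ dν_{f_k}`, where `(f_k, τ_k)` is the eigendecomposition of `T`;
the partial-trace condition is expressed via matrix elements in a Hilbert basis `g`
of `H₂`. -/
theorem stmt14 {H₁ H₂ K ι₁ ι₂ κ : Type*}
    [NormedAddCommGroup H₁] [InnerProductSpace ℂ H₁] [CompleteSpace H₁]
    [NormedAddCommGroup H₂] [InnerProductSpace ℂ H₂] [CompleteSpace H₂]
    [NormedAddCommGroup K] [InnerProductSpace ℂ K] [CompleteSpace K]
    (e : HilbertBasis ι₁ ℂ H₁) (g : HilbertBasis ι₂ ℂ H₂) (f : HilbertBasis κ ℂ K)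
    (tmul : H₁ → H₂ → K)
    (htinner : ∀ (a c : H₁) (b d : H₂), ⟪tmul a b, tmul c d⟫ = ⟪a, c⟫ * ⟪b, d⟫)
    (hdense : Dense ((Submodule.span ℂ {v : K | ∃ a b, v = tmul a b} : Submodule ℂ K) : Set K))
    (op : (H₁ →L[ℂ] H₁) → (H₂ →L[ℂ] H₂) → (K →L[ℂ] K))
    (hop : ∀ (A : H₁ →L[ℂ] H₁) (B : H₂ →L[ℂ] H₂) (x : H₁) (y : H₂),
      op A B (tmul x y) = tmul (A x) (B y))
    -- the spectral measure `E` of `A`, supported on `[0, ∞)`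
    (E : Set ℝ → (H₁ →L[ℂ] H₁))
    (hproj : ∀ ω, MeasurableSet ω → IsSelfAdjoint (E ω) ∧ (E ω) ∘L (E ω) = E ω)
    (μ : H₁ → Measure ℝ)
    (hμ : ∀ (x : H₁) (ω : Set ℝ), MeasurableSet ω →
      μ x ω = ENNReal.ofReal ((⟪x, E ω x⟫).re))
    (hμsupp : ∀ x, μ x (Set.Iio 0) = 0)
    (ν : K → Measure ℝ)
    (hν : ∀ (v : K) (ω : Set ℝ), MeasurableSet ω →
      ν v ω = ENNReal.ofReal ((⟪v, op (E ω) 1 v⟫).re))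
    -- `S`: nonnegative trace-class operator on `H₁`, eigenbasis `e`, eigenvalues `σ`
    (S : H₁ →L[ℂ] H₁) (hS : S.IsPositive)
    (σ : ι₁ → ℝ) (hσ : ∀ j, 0 ≤ σ j) (hSe : ∀ j, S (e j) = (σ j : ℂ) • e j)
    (hStr : Summable σ)
    -- finite energy
    (henergy : (∑' j, ENNReal.ofReal (σ j) * ∫⁻ l, ENNReal.ofReal l ∂(μ (e j))) < ⊤)
    -- `T`: nonnegative trace-class operator on `K`, eigenbasis `f`, eigenvalues `τ`
    (T : K →L[ℂ] K) (hT : T.IsPositive)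
    (τ : κ → ℝ) (hτ : ∀ k, 0 ≤ τ k) (hTf : ∀ k, T (f k) = (τ k : ℂ) • f k)
    (hTtr : Summable τ)
    -- partial trace of `T` over `H₂` equals `S`
    (hpt : ∀ x y : H₁,
      HasSum (fun i => ⟪tmul x (g i), T (tmul y (g i))⟫) ⟪x, S y⟫) :
    (∑' k, ENNReal.ofReal (τ k) * ∫⁻ l, ENNReal.ofReal l ∂(ν (f k))) < ⊤ ∧
      (∑' k, ENNReal.ofReal (τ k) * ∫⁻ l, ENNReal.ofReal l ∂(ν (f k))) =
        ∑' j, ENNReal.ofReal (σ j) * ∫⁻ l, ENNReal.ofReal l ∂(μ (e j)) :=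
  stmt14_general e g f tmul htinner hdense op hop E hproj μ hμ ν hν S σ hσ hSe henergy T hT τ hτ hTf
    hpt
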